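/- arXiv:1909.09900 — 2 statements merged into one kernel-verified Lean document; each statement's English description precedes it below -/
import Mathlib

section
/- For every prime v and every integer e ≥ 2, the number n = v + v^e is even, n ≥ 4, v ≤ n−2, and the only prime q with q ∣ (n−v) is q = v. Consequently, for each prime v there are infinitely many even n such that F_n contains a trivial autonomous component at v. -/
theorem stmt_5 (v : ℕ) (hv : Nat.Prime v) :
    (∀ e : ℕ, 2 ≤ e →
      Even (v + v ^ e) ∧ 4 ≤ v + v ^ e ∧ v ≤ (v + v ^ e) - 2 ∧
      (∀ q : ℕ, Nat.Prime q → q ∣ ((v + v ^ e) - v) → q = v)) ∧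
    Set.Infinite {n : ℕ | Even n ∧ ∃ e : ℕ, 2 ≤ e ∧ n = v + v ^ e} := by
  have hv2 : 2 ≤ v := hv.two_le
  have key : ∀ e : ℕ, 2 ≤ e →
      Even (v + v ^ e) ∧ 4 ≤ v + v ^ e ∧ v ≤ (v + v ^ e) - 2 ∧
      (∀ q : ℕ, Nat.Prime q → q ∣ ((v + v ^ e) - v) → q = v) := by
    intro e he
    have hpow : 4 ≤ v ^ e := by
      calc (4 : ℕ) = 2 ^ 2 := by norm_num
      _ ≤ v ^ e := Nat.pow_le_pow_left hv2 2 |>.trans (Nat.pow_le_pow_right (by omega) he)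
    refine ⟨?_, by omega, by omega, ?_⟩
    · have : Even (v ^ e) ↔ Even v := by
        rw [Nat.even_pow]; exact ⟨fun h => h.1, fun h => ⟨h, by omega⟩⟩
      rcases Nat.even_or_odd v with h | h
      · exact Even.add h (this.mpr h)
      · exact Odd.add_odd h ((Nat.not_even_iff_odd.mp (fun he => (Nat.not_even_iff_odd.mpr h) (this.mp he))))
    · intro q hq hdvd
      have : (v + v ^ e) - v = v ^ e := by omega
      rw [this] at hdvd
      exact (Nat.prime_dvd_prime_iff_eq hq hv).mp (hq.dvd_of_dvd_pow hdvd)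
  refine ⟨key, ?_⟩
  apply Set.infinite_of_injective_forall_mem (f := fun k : ℕ => v + v ^ (k + 2))
  · intro a b hab
    simp only at hab
    have := Nat.add_left_cancel hab
    have := Nat.pow_right_injective hv2 this
    omega
  · intro k
    exact ⟨(key (k + 2) (by omega)).1, k + 2, by omega, rfl⟩
end

section
/- If a and b are odd primes with a ≠ b and there exist integers x, y with x, y > 1, x ≠ y, and a^x + b = b^y + a, then setting n = a^x + b, the number n is even, a and b are primes in [2, n−2], the only prime divisor of n−a is b, and the only prime divisor of n−b is a, and a + b ≠ n. -/
theorem stmt_9 (a b : ℕ) (ha : Nat.Prime a) (hb : Nat.Prime b)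
    (hoa : Odd a) (hob : Odd b) (hab : a ≠ b)
    (x y : ℕ) (hx : 1 < x) (hy : 1 < y) (hxy : x ≠ y)
    (heq : a ^ x + b = b ^ y + a) :
    Even (a ^ x + b) ∧
    2 ≤ a ∧ a ≤ (a ^ x + b) - 2 ∧ 2 ≤ b ∧ b ≤ (a ^ x + b) - 2 ∧
    (∀ q : ℕ, Nat.Prime q → q ∣ ((a ^ x + b) - a) → q = b) ∧
    (∀ q : ℕ, Nat.Prime q → q ∣ ((a ^ x + b) - b) → q = a) ∧
    a + b ≠ a ^ x + b := by
  have ha2 : 2 ≤ a := ha.two_le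
  have hb2 : 2 ≤ b := hb.two_le
  have ha3 : 3 ≤ a := by
    rcases Nat.lt_or_ge a 3 with h | h
    · interval_cases a <;> simp_all [Nat.odd_iff]
    · exact h
  have hb3 : 3 ≤ b := by
    rcases Nat.lt_or_ge b 3 with h | h
    · interval_cases b <;> simp_all [Nat.odd_iff]
    · exact h
  have hax : a < a ^ x := by
    calc a = a ^ 1 := (pow_one a).symm
    _ < a ^ x := Nat.pow_lt_pow_right (by omega) hx
  have hby : b < b ^ y := by
    calc b = b ^ 1 := (pow_one b).symm
    _ < b ^ y := Nat.pow_lt_pow_right (by omega) hy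
  have hsub_a : (a ^ x + b) - a = b ^ y := by omega
  have hsub_b : (a ^ x + b) - b = a ^ x := by omega
  refine ⟨?_, ha2, by omega, hb2, by omega, ?_, ?_, by omega⟩
  · have := Odd.pow hoa (n := x)
    exact Odd.add_odd this hob
  · intro q hq hdvd
    rw [hsub_a] at hdvd
    exact (Nat.prime_dvd_prime_iff_eq hq hb).mp (hq.dvd_of_dvd_pow hdvd)
  · intro q hq hdvd
    rw [hsub_b] at hdvd
    exact (Nat.prime_dvd_prime_iff_eq hq ha).mp (hq.dvd_of_dvd_pow hdvd)
end
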